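/- arXiv:0911.4460 — 2 statements merged into one kernel-verified Lean document; each statement's English description precedes it below -/
import Mathlib

section
/- Let A be a densely defined closed symmetric operator on a complex separable Hilbert space H, and let L ⊆ β(A) be a Lagrangian subspace, i.e. L equals its ω̂-annihilator {v ∈ β(A) : ω̂(v, w) = 0 for all w ∈ L}. Then D := {x ∈ dom(A*) : γ(x) ∈ L} satisfies dom(A) ⊆ D ⊆ dom(A*) and the extension A_D := A*|_D is self-adjoint. -/
/-!
The Green form `ω` vanishes as soon as one argument lies in `dom A`, so it descends to `β(A)`,
and for `dom A ⊆ D ⊆ dom A†` the adjoint of `A_D := A†|_D` is `A†` restricted to the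
`ω`-annihilator of `D`: it is squeezed between `A_D` and `A†` because `A ≤ A_D`, and
`⟪A_D† x, y⟫ = ⟪x, A† y⟫` for `y ∈ D` says exactly that `ω(x, y) = 0`. Hence `A_D` is
self-adjoint precisely when `D` is its own `ω`-annihilator, and for `D = γ⁻¹(L)` this is the
Lagrangian property `L = L^ω̂`, transported along the surjection `γ`.
-/

open scoped ComplexInnerProductSpace

noncomputable section

variable {H : Type*} [NormedAddCommGroup H] [InnerProductSpace ℂ H] [CompleteSpace H]

/-- `dom A` viewed as a submodule of `dom A†` (for symmetric `A` one has `dom A ⊆ dom A†`). -/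
def minDom (A : H →ₗ.[ℂ] H) : Submodule ℂ A.adjoint.domain :=
  A.domain.comap A.adjoint.domain.subtype

/-- The abstract boundary space `β(A) := dom A† / dom A`. -/
abbrev beta (A : H →ₗ.[ℂ] H) := A.adjoint.domain ⧸ minDom A

/-- The natural quotient map `γ : dom A† → β(A)`. -/
def gammaMap (A : H →ₗ.[ℂ] H) : A.adjoint.domain →ₗ[ℂ] beta A :=
  (minDom A).mkQ

/-- The Green form `ω(x,y) := ⟪A† x, y⟫ - ⟪x, A† y⟫` on `dom A†`. -/
def omegaForm (A : H →ₗ.[ℂ] H) (x y : A.adjoint.domain) : ℂ :=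
  ⟪A.adjoint x, (y : H)⟫ - ⟪(x : H), A.adjoint y⟫

/-- The induced form `ω̂` on `β(A)`, computed on representatives.  (For a closed symmetric `A`
this is well defined, i.e. independent of the representatives.) -/
def omegaHat (A : H →ₗ.[ℂ] H) (v w : beta A) : ℂ :=
  omegaForm A (Quotient.out v) (Quotient.out w)

/-- The restriction `A_D := A†|_D` of the adjoint to an intermediate subspace
`dom A ⊆ D ⊆ dom A†`, as a partially defined operator on `H`. -/
def adjRestrict (A : H →ₗ.[ℂ] H) (D : Submodule ℂ A.adjoint.domain) : H →ₗ.[ℂ] H :=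
  A.adjoint.domRestrict (D.map A.adjoint.domain.subtype)

namespace LinearPMap

theorem le_domRestrict {R E F : Type*} [Ring R] [AddCommGroup E] [Module R E]
    [AddCommGroup F] [Module R F] {f g : E →ₗ.[R] F} {S : Submodule R E} (hf : f ≤ g)
    (hS : f.domain ≤ S) : f ≤ g.domRestrict S :=
  ⟨fun _ hx => ⟨hS hx, hf.1 hx⟩, fun _ y hxy =>
    (hf.2 (y := ⟨y, y.2.2⟩) hxy).trans (domRestrict_apply rfl).symm⟩

variable {𝕜 E F : Type*} [RCLike 𝕜] [NormedAddCommGroup E] [InnerProductSpace 𝕜 E]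
  [NormedAddCommGroup F] [InnerProductSpace 𝕜 F] [CompleteSpace E]

theorem adjoint_le_adjoint_of_le {S T : E →ₗ.[𝕜] F} (hS : Dense (S.domain : Set E))
    (h : S ≤ T) : T† ≤ S† := by
  have hT : Dense (T.domain : Set E) := hS.mono h.1
  refine IsFormalAdjoint.le_adjoint hS fun x y => ?_
  rw [h.2 (y := ⟨x, h.1 x.2⟩) rfl]
  exact (adjoint_isFormalAdjoint hT).symm _ y

end LinearPMap

variable {A : H →ₗ.[ℂ] H}

theorem omegaForm_sub_left (x x' y : A.adjoint.domain) :
    omegaForm A (x - x') y = omegaForm A x y - omegaForm A x' y := by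
  simp only [omegaForm, LinearPMap.map_sub, Submodule.coe_sub, inner_sub_left]
  ring

theorem omegaForm_sub_right (x y y' : A.adjoint.domain) :
    omegaForm A x (y - y') = omegaForm A x y - omegaForm A x y' := by
  simp only [omegaForm, LinearPMap.map_sub, Submodule.coe_sub, inner_sub_right]
  ring

theorem minDom_le_comap_gammaMap (L : Submodule ℂ (beta A)) :
    minDom A ≤ L.comap (gammaMap A) :=
  (Submodule.ker_mkQ (minDom A)).ge.trans (LinearMap.ker_le_comap _)

theorem adjRestrict_apply (D : Submodule ℂ A.adjoint.domain) (x : (adjRestrict A D).domain) :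
    adjRestrict A D x = A.adjoint ⟨x, x.2.2⟩ :=
  LinearPMap.domRestrict_apply rfl

section Symmetric

variable (hdense : Dense (A.domain : Set H))
  (hsym : ∀ x y : A.domain, ⟪A x, (y : H)⟫ = ⟪(x : H), A y⟫)
include hdense hsym

theorem le_adjoint_of_symm : A ≤ A.adjoint :=
  LinearPMap.IsFormalAdjoint.le_adjoint hdense hsym

theorem adjoint_apply_of_mem_domain (x : A.adjoint.domain) (hx : (x : H) ∈ A.domain) :
    A.adjoint x = A ⟨x, hx⟩ :=
  ((le_adjoint_of_symm hdense hsym).2 rfl).symm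

theorem omegaForm_eq_zero_of_mem_left (x y : A.adjoint.domain) (hx : (x : H) ∈ A.domain) :
    omegaForm A x y = 0 := by
  rw [omegaForm, adjoint_apply_of_mem_domain hdense hsym x hx, sub_eq_zero]
  exact (LinearPMap.adjoint_isFormalAdjoint hdense).symm ⟨x, hx⟩ y

theorem omegaForm_eq_zero_of_mem_right (x y : A.adjoint.domain) (hy : (y : H) ∈ A.domain) :
    omegaForm A x y = 0 := by
  rw [omegaForm, adjoint_apply_of_mem_domain hdense hsym y hy, sub_eq_zero]
  exact LinearPMap.adjoint_isFormalAdjoint hdense x ⟨y, hy⟩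

theorem omegaForm_congr {x x' y y' : A.adjoint.domain} (hx : x - x' ∈ minDom A)
    (hy : y - y' ∈ minDom A) : omegaForm A x y = omegaForm A x' y' := by
  have hleft := omegaForm_eq_zero_of_mem_left hdense hsym (x - x') y hx
  have hright := omegaForm_eq_zero_of_mem_right hdense hsym x' (y - y') hy
  rw [omegaForm_sub_left, sub_eq_zero] at hleft
  rw [omegaForm_sub_right, sub_eq_zero] at hright
  rw [hleft, hright]

theorem omegaHat_gammaMap (x y : A.adjoint.domain) :
    omegaHat A (gammaMap A x) (gammaMap A y) = omegaForm A x y :=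
  omegaForm_congr hdense hsym
    ((Submodule.Quotient.eq _).mp (Quotient.out_eq (gammaMap A x)))
    ((Submodule.Quotient.eq _).mp (Quotient.out_eq (gammaMap A y)))

theorem mem_comap_gammaMap_iff_of_lagrangian {L : Submodule ℂ (beta A)}
    (hL : (L : Set (beta A)) = {v : beta A | ∀ w ∈ L, omegaHat A v w = 0})
    (x : A.adjoint.domain) :
    x ∈ L.comap (gammaMap A) ↔ ∀ y ∈ L.comap (gammaMap A), omegaForm A x y = 0 := by
  rw [Submodule.mem_comap, ← SetLike.mem_coe, hL, Set.mem_ofPred_eq]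
  refine ⟨fun h y hy => omegaHat_gammaMap hdense hsym x y ▸ h _ hy, fun h w hw => ?_⟩
  obtain ⟨y, rfl⟩ : ∃ y, gammaMap A y = w := Submodule.mkQ_surjective _ w
  rw [omegaHat_gammaMap hdense hsym]
  exact h y hw

section Restriction

variable {D : Submodule ℂ A.adjoint.domain} (hD : minDom A ≤ D)
include hD

theorem le_adjRestrict : A ≤ adjRestrict A D :=
  have hA := le_adjoint_of_symm hdense hsym
  LinearPMap.le_domRestrict hA fun x hx =>
    Submodule.mem_map_of_mem (p := D) (r := ⟨x, hA.1 hx⟩) (hD hx)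

theorem dense_adjRestrict_domain : Dense ((adjRestrict A D).domain : Set H) :=
  hdense.mono (le_adjRestrict hdense hsym hD).1

theorem adjRestrict_le_adjoint (hω : ∀ x ∈ D, ∀ y ∈ D, omegaForm A x y = 0) :
    adjRestrict A D ≤ (adjRestrict A D).adjoint := by
  refine LinearPMap.IsFormalAdjoint.le_adjoint (dense_adjRestrict_domain hdense hsym hD) ?_
  rintro ⟨_, ⟨x, hxD, rfl⟩, _⟩ ⟨_, ⟨y, hyD, rfl⟩, _⟩
  rw [adjRestrict_apply, adjRestrict_apply]
  exact sub_eq_zero.mp (hω x hxD y hyD)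

theorem adjoint_adjRestrict_le
    (hmax : ∀ x : A.adjoint.domain, (∀ y ∈ D, omegaForm A x y = 0) → x ∈ D) :
    (adjRestrict A D).adjoint ≤ adjRestrict A D := by
  have hle := LinearPMap.adjoint_le_adjoint_of_le hdense (le_adjRestrict hdense hsym hD)
  refine LinearPMap.le_domRestrict hle fun z hz => ?_
  refine Submodule.mem_map_of_mem (p := D) (r := ⟨z, hle.1 hz⟩) (hmax _ fun y hy => ?_)
  have hyT : (y : H) ∈ (adjRestrict A D).domain := ⟨Submodule.mem_map_of_mem hy, y.2⟩
  have := LinearPMap.adjoint_isFormalAdjoint (dense_adjRestrict_domain hdense hsym hD)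
    ⟨z, hz⟩ ⟨y, hyT⟩
  rw [adjRestrict_apply, hle.2 (y := ⟨z, hle.1 hz⟩) rfl] at this
  exact sub_eq_zero.mpr this

theorem isSelfAdjoint_adjRestrict
    (hD_eq : ∀ x : A.adjoint.domain, x ∈ D ↔ ∀ y ∈ D, omegaForm A x y = 0) :
    IsSelfAdjoint (adjRestrict A D) :=
  le_antisymm (adjoint_adjRestrict_le hdense hsym hD fun x => (hD_eq x).2)
    (adjRestrict_le_adjoint hdense hsym hD fun x hx => (hD_eq x).1 hx)

end Restriction

end Symmetric

theorem lagrangian_gives_selfAdjoint_extension_general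
    (A : H →ₗ.[ℂ] H)
    (hdense : Dense (A.domain : Set H))
    (hsym : ∀ x y : A.domain, ⟪A x, (y : H)⟫ = ⟪(x : H), A y⟫)
    (L : Submodule ℂ (beta A))
    (hL : (L : Set (beta A)) = {v : beta A | ∀ w ∈ L, omegaHat A v w = 0}) :
    minDom A ≤ Submodule.comap (gammaMap A) L ∧
    IsSelfAdjoint (adjRestrict A (Submodule.comap (gammaMap A) L)) :=
  ⟨minDom_le_comap_gammaMap L, isSelfAdjoint_adjRestrict hdense hsym
    (minDom_le_comap_gammaMap L) (mem_comap_gammaMap_iff_of_lagrangian hdense hsym hL)⟩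

/-- If `L ⊆ β(A)` is a Lagrangian subspace, i.e. `L` equals its `ω̂`-annihilator,
then `D := γ⁻¹(L) = {x ∈ dom A† : γ(x) ∈ L}` satisfies `dom A ⊆ D ⊆ dom A†` and the extension
`A_D := A†|_D` is self-adjoint. -/
theorem lagrangian_gives_selfAdjoint_extension
    [TopologicalSpace.SeparableSpace H]
    (A : H →ₗ.[ℂ] H)
    (hdense : Dense (A.domain : Set H))
    (hclosed : IsClosed (A.graph : Set (H × H)))
    (hsym : ∀ x y : A.domain, ⟪A x, (y : H)⟫ = ⟪(x : H), A y⟫)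
    (L : Submodule ℂ (beta A))
    (hL : (L : Set (beta A)) = {v : beta A | ∀ w ∈ L, omegaHat A v w = 0}) :
    minDom A ≤ Submodule.comap (gammaMap A) L ∧
    IsSelfAdjoint (adjRestrict A (Submodule.comap (gammaMap A) L)) :=
  lagrangian_gives_selfAdjoint_extension_general A hdense hsym L hL
end
end

section
/- Let A be a densely defined closed symmetric operator on a complex separable Hilbert space H, and let D be a subspace with dom(A) ⊆ D ⊆ dom(A*) such that A_D := A*|_D is a self-adjoint Fredholm operator (ker(A_D) is finite-dimensional and the range of A_D is closed with finite codimension in H). Then CD(A) := γ(ker A*) and γ(D) form a Fredholm pair of subspaces of β(A): both are closed in β(A), their intersection CD(A) ∩ γ(D) is finite-dimensional, and their sum CD(A) + γ(D) is closed and of finite codimension in β(A). -/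
open scoped ComplexInnerProductSpace

noncomputable section

variable {H : Type*} [NormedAddCommGroup H] [InnerProductSpace ℂ H] [CompleteSpace H]

/-- The graph norm on the domain of the adjoint `A†`. -/
def graphNorm (A : H →ₗ.[ℂ] H) (x : A.adjoint.domain) : ℝ :=
  Real.sqrt (‖(x : H)‖ ^ 2 + ‖A.adjoint x‖ ^ 2)

/-- The quotient norm on `β(A)` induced by the graph norm of `A†`. -/
def quotNorm (A : H →ₗ.[ℂ] H) (v : beta A) : ℝ :=
  sInf (graphNorm A '' {x : A.adjoint.domain | Submodule.Quotient.mk x = v})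

/-- The natural Cauchy data space `CD(A) := γ(ker A†) ⊆ β(A)`. -/
def cauchyData (A : H →ₗ.[ℂ] H) : Submodule ℂ (beta A) :=
  (LinearMap.ker A.adjoint.toFun).map (gammaMap A)

/-- The restriction of `A†` to an intermediate subspace `D`, as a linear map `D → H`. -/
def restrictMap (A : H →ₗ.[ℂ] H) (D : Submodule ℂ A.adjoint.domain) : D →ₗ[ℂ] H :=
  A.adjoint.toFun.comp D.subtype

/-!
Pulled back along `γ`, the subspaces `CD(A)`, `γ(D)` and `CD(A) + γ(D)` become `ker A† + dom A`,
`D` and `ker A† + D`: the sets of `z` with `A† z ∈ ran A`, with `(z, A† z) ∈ graph A_D`, and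
with `A† z ∈ ran A_D`. Since the graph norm dominates the norm of `(z, A† z)` in `H × H`, each is
closed once `ran A`, `graph A_D` and `ran A_D` are. The self-adjoint `A_D` is closed. For
`ran A = snd (graph A)`: `snd` maps the Banach space `graph A_D` onto the closed `ran A_D`, so it
is a quotient map by the open mapping theorem, and the saturation of `graph A` is
`graph A + (graph A_D ∩ (H × 0))`, closed since the second summand is finite-dimensional.
Finally `CD(A) ∩ γ(D) ⊆ γ(ker A_D)`, and `A†` induces an injection
`β(A) / (CD(A) + γ(D)) → H / ran A_D`.
-/

theorem ContinuousLinearMap.isClosed_image_of_finiteDimensional_inf_ker {𝕜 E F : Type*}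
    [NontriviallyNormedField 𝕜] [CompleteSpace 𝕜]
    [NormedAddCommGroup E] [NormedSpace 𝕜 E] [CompleteSpace E]
    [NormedAddCommGroup F] [NormedSpace 𝕜 F] [CompleteSpace F]
    (f : E →L[𝕜] F) {G M : Submodule 𝕜 E} (hMG : M ≤ G) (hG : IsClosed (G : Set E))
    (hM : IsClosed (M : Set E)) [FiniteDimensional 𝕜 ↥(G ⊓ LinearMap.ker (f : E →ₗ[𝕜] F))]
    (hR : IsClosed (f '' G)) :
    IsClosed (f '' M) := by
  let R : Submodule 𝕜 F := G.map (f : E →ₗ[𝕜] F)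
  have : CompleteSpace G := hG.completeSpace_coe
  have : CompleteSpace R := hR.completeSpace_coe
  let g : G →L[𝕜] R := (f.comp G.subtypeL).codRestrict R fun x => ⟨x, x.2, rfl⟩
  have hg : Function.Surjective g := by
    rintro ⟨_, x, hx, rfl⟩
    exact ⟨⟨x, hx⟩, rfl⟩
  have : FiniteDimensional 𝕜 (LinearMap.ker (g : G →ₗ[𝕜] R)) := by
    have hker : LinearMap.ker (g : G →ₗ[𝕜] R) =
        (G ⊓ LinearMap.ker (f : E →ₗ[𝕜] F)).comap G.subtype := by
      ext x
      simp only [LinearMap.mem_ker, Submodule.mem_comap, Submodule.mem_inf, Submodule.coe_subtype,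
        SetLike.coe_mem, true_and, ← Subtype.coe_inj]
      rfl
    rw [hker]
    exact Module.Finite.equiv (Submodule.comapSubtypeEquivOfLe inf_le_left).symm
  let M' : Submodule 𝕜 G := M.comap G.subtype
  have hM' : IsClosed (M'.map (g : G →ₗ[𝕜] R) : Set R) := by
    rw [← (g.isQuotientMap hg).isClosed_preimage, ← ContinuousLinearMap.coe_coe g,
      ← Submodule.comap_coe, Submodule.comap_map_eq]
    exact Submodule.isClosed_sup_finiteDimensional _ _ (hM.preimage continuous_subtype_val)
  have himage : f '' M = Subtype.val '' (M'.map (g : G →ₗ[𝕜] R) : Set R) := by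
    ext y
    constructor
    · rintro ⟨x, hx, rfl⟩
      exact ⟨g ⟨x, hMG hx⟩, ⟨⟨x, hMG hx⟩, hx, rfl⟩, rfl⟩
    · rintro ⟨_, ⟨x, hx, rfl⟩, rfl⟩
      exact ⟨x, hx, rfl⟩
  rw [himage]
  exact hR.isClosedEmbedding_subtypeVal.isClosedMap _ hM'

theorem FiniteDimensional.of_ker_le_ker {K M N Q : Type*} [DivisionRing K]
    [AddCommGroup M] [Module K M] [AddCommGroup N] [Module K N] [FiniteDimensional K N]
    [AddCommGroup Q] [Module K Q] (f : M →ₗ[K] N) (p : M →ₗ[K] Q)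
    (hp : Function.Surjective p) (h : LinearMap.ker f ≤ LinearMap.ker p) :
    FiniteDimensional K Q :=
  have : FiniteDimensional K (M ⧸ LinearMap.ker f) := .equiv f.quotKerEquivRange.symm
  .of_surjective ((LinearMap.ker f).liftQ p h) fun q =>
    let ⟨x, hx⟩ := hp q; ⟨Submodule.Quotient.mk x, hx⟩

section BoundarySpace

variable (A : H →ₗ.[ℂ] H)

def adjointGraphMap : A.adjoint.domain →ₗ[ℂ] H × H :=
  A.adjoint.domain.subtype.prod A.adjoint.toFun

/-- `quotNorm` is not a `Norm` instance on `beta A`, so closedness in `β(A)` is phrased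
through it directly. -/
def IsQuotNormClosed (S : Submodule ℂ (beta A)) : Prop :=
  ∀ v : beta A, (∀ ε > (0 : ℝ), ∃ w ∈ S, quotNorm A (v - w) < ε) → v ∈ S

variable {A}

theorem ker_gammaMap : LinearMap.ker (gammaMap A) = minDom A :=
  Submodule.ker_mkQ _

theorem gammaMap_surjective : Function.Surjective (gammaMap A) :=
  Submodule.mkQ_surjective _

theorem adjointGraphMap_injective : Function.Injective (adjointGraphMap A) :=
  fun _ _ h => Subtype.ext (congrArg Prod.fst h)

theorem exists_graphNorm_lt_of_quotNorm_lt {v : beta A} {ε : ℝ} (h : quotNorm A v < ε) :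
    ∃ z, gammaMap A z = v ∧ graphNorm A z < ε := by
  obtain ⟨z₀, hz₀⟩ := Submodule.Quotient.mk_surjective _ v
  have hne : (graphNorm A '' {z | Submodule.Quotient.mk z = v}).Nonempty := ⟨_, z₀, hz₀, rfl⟩
  have hbdd : BddBelow (graphNorm A '' {z | Submodule.Quotient.mk z = v}) :=
    ⟨0, by rintro _ ⟨z, -, rfl⟩; exact Real.sqrt_nonneg _⟩
  obtain ⟨_, ⟨z, hz, rfl⟩, hlt⟩ := (csInf_lt_iff hbdd hne).1 h
  exact ⟨z, hz, hlt⟩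

theorem norm_adjointGraphMap_le (z : A.adjoint.domain) :
    ‖adjointGraphMap A z‖ ≤ graphNorm A z := by
  rw [Prod.norm_def]
  refine max_le ?_ ?_ <;> rw [graphNorm, Real.le_sqrt (norm_nonneg _) (by positivity)]
  · exact le_add_of_nonneg_right (by positivity)
  · exact le_add_of_nonneg_left (by positivity)

theorem isQuotNormClosed_of_isClosed {S : Submodule ℂ (beta A)} {C : Set (H × H)}
    (hC : IsClosed C) (hS : ∀ z, gammaMap A z ∈ S ↔ adjointGraphMap A z ∈ C) :
    IsQuotNormClosed A S := by
  intro v hv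
  obtain ⟨x, rfl⟩ := gammaMap_surjective v
  refine (hS x).2 (hC.closure_subset (Metric.mem_closure_iff.2 fun ε hε => ?_))
  obtain ⟨w, hwS, hw⟩ := hv ε hε
  obtain ⟨z, hz, hzε⟩ := exists_graphNorm_lt_of_quotNorm_lt hw
  refine ⟨adjointGraphMap A (x - z), (hS _).1 ?_, ?_⟩
  · rwa [map_sub, hz, sub_sub_cancel]
  · rw [dist_eq_norm, map_sub, sub_sub_cancel]
    exact (norm_adjointGraphMap_le z).trans_lt hzε

theorem gammaMap_mem_map_iff {W : Submodule ℂ A.adjoint.domain} (hW : minDom A ≤ W)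
    (z : A.adjoint.domain) : gammaMap A z ∈ W.map (gammaMap A) ↔ z ∈ W := by
  rw [← Submodule.mem_comap, Submodule.comap_map_eq, ker_gammaMap, sup_eq_left.2 hW]

theorem gammaMap_mem_map_sup_ker_iff {W : Submodule ℂ A.adjoint.domain} (hW : minDom A ≤ W)
    (z : A.adjoint.domain) :
    gammaMap A z ∈ (W ⊔ LinearMap.ker A.adjoint.toFun).map (gammaMap A) ↔
      A.adjoint z ∈ W.map A.adjoint.toFun := by
  rw [gammaMap_mem_map_iff (hW.trans le_sup_left), ← Submodule.comap_map_eq]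
  rfl

theorem isQuotNormClosed_map_sup_ker {W : Submodule ℂ A.adjoint.domain} (hW : minDom A ≤ W)
    (hR : IsClosed (W.map A.adjoint.toFun : Set H)) :
    IsQuotNormClosed A ((W ⊔ LinearMap.ker A.adjoint.toFun).map (gammaMap A)) :=
  isQuotNormClosed_of_isClosed (hR.preimage continuous_snd) (gammaMap_mem_map_sup_ker_iff hW)

theorem graph_adjRestrict (D : Submodule ℂ A.adjoint.domain) :
    (adjRestrict A D).graph = D.map (adjointGraphMap A) := by
  ext ⟨x, y⟩
  simp only [adjRestrict, adjointGraphMap, LinearPMap.mem_graph_iff, Submodule.mem_map]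
  constructor
  · rintro ⟨⟨_, ⟨z, hz, rfl⟩, hx⟩, rfl, rfl⟩
    exact ⟨z, hz, rfl⟩
  · rintro ⟨z, hz, ⟨⟩⟩
    exact ⟨⟨z, ⟨z, hz, rfl⟩, z.2⟩, rfl, rfl⟩

theorem graph_eq_map_minDom (hA : A ≤ A.adjoint) :
    A.graph = (minDom A).map (adjointGraphMap A) := by
  ext ⟨x, y⟩
  simp only [adjointGraphMap, LinearPMap.mem_graph_iff, Submodule.mem_map]
  constructor
  · rintro ⟨⟨x, hx⟩, rfl, rfl⟩
    exact ⟨⟨x, hA.1 hx⟩, hx, Prod.ext rfl (hA.2 rfl).symm⟩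
  · rintro ⟨z, hz, ⟨⟩⟩
    exact ⟨⟨z, hz⟩, rfl, hA.2 rfl⟩

theorem isQuotNormClosed_map_gammaMap {D : Submodule ℂ A.adjoint.domain} (hD : minDom A ≤ D)
    (hDclosed : (adjRestrict A D).IsClosed) : IsQuotNormClosed A (D.map (gammaMap A)) :=
  isQuotNormClosed_of_isClosed hDclosed fun z => by
    rw [gammaMap_mem_map_iff hD, graph_adjRestrict, Submodule.map_coe,
      adjointGraphMap_injective.mem_set_image, SetLike.mem_coe]

theorem range_restrictMap (D : Submodule ℂ A.adjoint.domain) :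
    LinearMap.range (restrictMap A D) = D.map A.adjoint.toFun := by
  rw [restrictMap, LinearMap.range_comp, Submodule.range_subtype]

theorem snd_image_map_adjointGraphMap (W : Submodule ℂ A.adjoint.domain) :
    Prod.snd '' (W.map (adjointGraphMap A) : Set (H × H)) = W.map A.adjoint.toFun := by
  rw [Submodule.map_coe, Submodule.map_coe, Set.image_image]
  rfl

theorem isClosed_map_minDom (hA : A ≤ A.adjoint) (hclosed : A.IsClosed)
    {D : Submodule ℂ A.adjoint.domain} (hD : minDom A ≤ D) (hDclosed : (adjRestrict A D).IsClosed)
    [FiniteDimensional ℂ (LinearMap.ker (restrictMap A D))]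
    (hran : IsClosed (LinearMap.range (restrictMap A D) : Set H)) :
    IsClosed ((minDom A).map A.adjoint.toFun : Set H) := by
  have hfin : FiniteDimensional ℂ ↥(D.map (adjointGraphMap A) ⊓
      LinearMap.ker (ContinuousLinearMap.snd ℂ H H : H × H →ₗ[ℂ] H)) := by
    refine Submodule.finiteDimensional_of_le (?_ :
      _ ≤ (LinearMap.ker (restrictMap A D)).map (adjointGraphMap A ∘ₗ D.subtype))
    rintro _ ⟨⟨z, hz, rfl⟩, hz0⟩
    exact ⟨⟨z, hz⟩, hz0, rfl⟩
  rw [LinearPMap.IsClosed, graph_eq_map_minDom hA] at hclosed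
  rw [LinearPMap.IsClosed, graph_adjRestrict] at hDclosed
  rw [range_restrictMap, ← snd_image_map_adjointGraphMap] at hran
  rw [← snd_image_map_adjointGraphMap]
  exact (ContinuousLinearMap.snd ℂ H H).isClosed_image_of_finiteDimensional_inf_ker
    (Submodule.map_mono hD) hDclosed hclosed hran

theorem cauchyData_eq_map_sup_ker :
    cauchyData A = (minDom A ⊔ LinearMap.ker A.adjoint.toFun).map (gammaMap A) := by
  rw [Submodule.map_sup, gammaMap, Submodule.mkQ_map_self, bot_sup_eq]
  rfl

theorem cauchyData_sup_map_gammaMap (D : Submodule ℂ A.adjoint.domain) :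
    cauchyData A ⊔ D.map (gammaMap A) = (D ⊔ LinearMap.ker A.adjoint.toFun).map (gammaMap A) := by
  rw [Submodule.map_sup, sup_comm]
  rfl

theorem cauchyData_inf_map_gammaMap_le {D : Submodule ℂ A.adjoint.domain} (hD : minDom A ≤ D) :
    cauchyData A ⊓ D.map (gammaMap A) ≤
      (LinearMap.ker (restrictMap A D)).map (gammaMap A ∘ₗ D.subtype) := by
  rintro _ ⟨⟨k, hk, rfl⟩, hkD⟩
  exact ⟨⟨k, (gammaMap_mem_map_iff hD k).1 hkD⟩, hk, rfl⟩

theorem finiteDimensional_quotient_cauchyData_sup {D : Submodule ℂ A.adjoint.domain}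
    (hD : minDom A ≤ D) [FiniteDimensional ℂ (H ⧸ LinearMap.range (restrictMap A D))] :
    FiniteDimensional ℂ (beta A ⧸ (cauchyData A ⊔ D.map (gammaMap A))) := by
  rw [cauchyData_sup_map_gammaMap]
  refine .of_ker_le_ker ((LinearMap.range (restrictMap A D)).mkQ ∘ₗ A.adjoint.toFun)
    (Submodule.mkQ _ ∘ₗ gammaMap A) ((Submodule.mkQ_surjective _).comp gammaMap_surjective)
    fun z hz => ?_
  simp only [LinearMap.mem_ker, LinearMap.comp_apply, Submodule.mkQ_apply,
    Submodule.Quotient.mk_eq_zero] at hz ⊢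
  rwa [gammaMap_mem_map_sup_ker_iff hD, ← range_restrictMap]

end BoundarySpace

theorem cauchyData_fredholm_pair_general
    (A : H →ₗ.[ℂ] H)
    (hdense : Dense (A.domain : Set H))
    (hclosed : IsClosed (A.graph : Set (H × H)))
    (hsym : ∀ x y : A.domain, ⟪A x, (y : H)⟫ = ⟪(x : H), A y⟫)
    (D : Submodule ℂ A.adjoint.domain)
    (hD : minDom A ≤ D)
    (hsa : IsSelfAdjoint (adjRestrict A D))
    (hker : FiniteDimensional ℂ (LinearMap.ker (restrictMap A D)))
    (hran : IsClosed ((LinearMap.range (restrictMap A D) : Submodule ℂ H) : Set H))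
    (hcoker : FiniteDimensional ℂ (H ⧸ LinearMap.range (restrictMap A D))) :
    (∀ v : beta A,
        (∀ ε > (0 : ℝ), ∃ w ∈ cauchyData A, quotNorm A (v - w) < ε) → v ∈ cauchyData A) ∧
    (∀ v : beta A,
        (∀ ε > (0 : ℝ), ∃ w ∈ D.map (gammaMap A), quotNorm A (v - w) < ε) →
          v ∈ D.map (gammaMap A)) ∧
    FiniteDimensional ℂ (cauchyData A ⊓ D.map (gammaMap A) : Submodule ℂ (beta A)) ∧
    (∀ v : beta A,
        (∀ ε > (0 : ℝ), ∃ w ∈ cauchyData A ⊔ D.map (gammaMap A), quotNorm A (v - w) < ε) →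
          v ∈ cauchyData A ⊔ D.map (gammaMap A)) ∧
    FiniteDimensional ℂ (beta A ⧸ (cauchyData A ⊔ D.map (gammaMap A))) := by
  have hA : A ≤ A.adjoint := LinearPMap.IsFormalAdjoint.le_adjoint hdense hsym
  have hcd : IsQuotNormClosed A (cauchyData A) := by
    rw [cauchyData_eq_map_sup_ker]
    exact isQuotNormClosed_map_sup_ker le_rfl
      (isClosed_map_minDom hA hclosed hD hsa.isClosed hran)
  have hsum : IsQuotNormClosed A (cauchyData A ⊔ D.map (gammaMap A)) := by
    rw [cauchyData_sup_map_gammaMap]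
    exact isQuotNormClosed_map_sup_ker hD (range_restrictMap D ▸ hran)
  exact ⟨hcd, isQuotNormClosed_map_gammaMap hD hsa.isClosed,
    Submodule.finiteDimensional_of_le (cauchyData_inf_map_gammaMap_le hD), hsum,
    finiteDimensional_quotient_cauchyData_sup hD⟩

/-- If `dom A ⊆ D ⊆ dom A†` and `A_D := A†|_D` is a self-adjoint Fredholm
operator (finite-dimensional kernel, closed range of finite codimension), then
`CD(A) = γ(ker A†)` and `γ(D)` form a Fredholm pair of subspaces of `β(A)`: both are closed
(in the quotient norm), their intersection is finite-dimensional, and their sum is closed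
and of finite codimension in `β(A)`. -/
theorem cauchyData_fredholm_pair
    [TopologicalSpace.SeparableSpace H]
    (A : H →ₗ.[ℂ] H)
    (hdense : Dense (A.domain : Set H))
    (hclosed : IsClosed (A.graph : Set (H × H)))
    (hsym : ∀ x y : A.domain, ⟪A x, (y : H)⟫ = ⟪(x : H), A y⟫)
    (D : Submodule ℂ A.adjoint.domain)
    (hD : minDom A ≤ D)
    (hsa : IsSelfAdjoint (adjRestrict A D))
    (hker : FiniteDimensional ℂ (LinearMap.ker (restrictMap A D)))
    (hran : IsClosed ((LinearMap.range (restrictMap A D) : Submodule ℂ H) : Set H))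
    (hcoker : FiniteDimensional ℂ (H ⧸ LinearMap.range (restrictMap A D))) :
    (∀ v : beta A,
        (∀ ε > (0 : ℝ), ∃ w ∈ cauchyData A, quotNorm A (v - w) < ε) → v ∈ cauchyData A) ∧
    (∀ v : beta A,
        (∀ ε > (0 : ℝ), ∃ w ∈ D.map (gammaMap A), quotNorm A (v - w) < ε) →
          v ∈ D.map (gammaMap A)) ∧
    FiniteDimensional ℂ (cauchyData A ⊓ D.map (gammaMap A) : Submodule ℂ (beta A)) ∧
    (∀ v : beta A,
        (∀ ε > (0 : ℝ), ∃ w ∈ cauchyData A ⊔ D.map (gammaMap A), quotNorm A (v - w) < ε) →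
          v ∈ cauchyData A ⊔ D.map (gammaMap A)) ∧
    FiniteDimensional ℂ (beta A ⧸ (cauchyData A ⊔ D.map (gammaMap A))) :=
  cauchyData_fredholm_pair_general A hdense hclosed hsym D hD hsa hker hran hcoker
end
end
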